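/- arXiv:1810.12590 — 5 statements merged into one kernel-verified Lean document; each statement's English description precedes it below -/
import Mathlib

section
/- Let $A \in \mathbb{R}^{n\times n}$ be invertible, $B \in \mathbb{R}^{n\times m}$, and $P \in \mathbb{R}^{n\times n}$ be symmetric positive semidefinite. Then the closed-loop matrix $A_{cl} = A - B(B^T P B + I)^{-1} B^T P A$ is invertible, and moreover $\det(A_{cl}) = \det(A)/\det(B^T P B + I)$. -/
/-!
With `M = C * B + 1`, the closed-loop matrix factors as `(1 - B * (M⁻¹ * C)) * A`, and Sylvester's
determinant identity moves the rank-`m` correction to the small side, where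
`1 - M⁻¹ * C * B = M⁻¹ * (M - C * B) = M⁻¹`. For `C = Bᵀ * P` with `P ⪰ 0`, `M` is positive definite,
hence invertible.
-/

open Matrix

theorem Matrix.det_sub_mul_inv_add_one_mul {n m K : Type*} [Fintype n] [DecidableEq n] [Fintype m]
    [DecidableEq m] [Field K] (A : Matrix n n K) (B : Matrix n m K) (C : Matrix m n K)
    (h : IsUnit (C * B + 1).det) :
    (A - B * (C * B + 1)⁻¹ * C * A).det = A.det / (C * B + 1).det := by
  set M := C * B + 1
  have hfactor : A - B * M⁻¹ * C * A = (1 - B * (M⁻¹ * C)) * A := by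
    rw [Matrix.sub_mul, Matrix.one_mul, Matrix.mul_assoc B]
  have hsmall : (1 : Matrix m m K) - M⁻¹ * C * B = M⁻¹ := calc
    1 - M⁻¹ * C * B = M⁻¹ * (M - C * B) := by
      rw [Matrix.mul_sub, nonsing_inv_mul M h, Matrix.mul_assoc]
    _ = M⁻¹ := by simp [M]
  rw [hfactor, det_mul, det_one_sub_mul_comm, hsmall, det_nonsing_inv, Ring.inverse_eq_inv,
    div_eq_inv_mul]

open scoped ComplexOrder in
theorem Matrix.PosSemidef.posDef_conjTranspose_mul_mul_add_one {n m 𝕜 : Type*} [Fintype n]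
    [Fintype m] [DecidableEq m] [RCLike 𝕜] {P : Matrix n n 𝕜} (hP : P.PosSemidef)
    (B : Matrix n m 𝕜) : (Bᴴ * P * B + 1).PosDef :=
  PosDef.posSemidef_add (hP.conjTranspose_mul_mul_same B) .one

theorem stmt0 {n m : ℕ} (A : Matrix (Fin n) (Fin n) ℝ) (B : Matrix (Fin n) (Fin m) ℝ)
    (P : Matrix (Fin n) (Fin n) ℝ) (hA : IsUnit A.det) (hP : P.PosSemidef) :
    IsUnit (A - B * (Bᵀ * P * B + 1)⁻¹ * Bᵀ * P * A).det ∧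
    (A - B * (Bᵀ * P * B + 1)⁻¹ * Bᵀ * P * A).det = A.det / (Bᵀ * P * B + 1).det := by
  have hM : IsUnit (Bᵀ * P * B + 1).det := by
    have hpos : (Bᵀ * P * B + 1).PosDef := by
      simpa using hP.posDef_conjTranspose_mul_mul_add_one B
    exact hpos.det_pos.ne'.isUnit
  have hdet : (A - B * (Bᵀ * P * B + 1)⁻¹ * Bᵀ * P * A).det = A.det / (Bᵀ * P * B + 1).det := by
    simpa only [Matrix.mul_assoc] using det_sub_mul_inv_add_one_mul A B (Bᵀ * P) hM
  exact ⟨hdet ▸ hA.div hM, hdet⟩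
end

section
/- Consider the discrete-time Riccati recursion on horizon $N$: $P_N = 0$ and $P_t = A^T P_{t+1} A + Q - A^T P_{t+1} B (B^T P_{t+1} B + I)^{-1} B^T P_{t+1} A$ for $t = N-1, \ldots, 2$, with feedback gains $K_t = -(B^T P_{t+1} B + I)^{-1} B^T P_{t+1} A$. Suppose $A$ is invertible, $B$ has full column rank, $(A,B)$ is controllable, and $N \geq n+2$. If $Q, Q' \succeq 0$ are two positive semidefinite matrices whose Riccati recursions produce identical closed-loop matrices $A + BK_t = A + BK'_t$ for all $t = 1, \ldots, N-1$, then $Q = Q'$. -/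
/-!
With `K = -(Bᵀ P B + 1)⁻¹ Bᵀ P A` one has `Bᵀ P (A + B K) = -K`, so `A = (1 + B Bᵀ P)(A + B K)`
and the closed-loop matrix is invertible. As `B` is injective, equal closed loops give equal
gains, and cancelling `A + B K` gives `Bᵀ P_t = Bᵀ P'_t`. The nonlinear terms of the two
recursions then agree, so `D_t = P_t - P'_t` satisfies `D_t = Aᵀ D_{t+1} A + (Q - Q')`, i.e.
`D_{N-j} = ∑_{k<j} (Aᵀ)ᵏ (Q - Q') Aᵏ`. Differencing and `Bᵀ D_t = 0` give
`Bᵀ (Aᵀ)ʲ (Q - Q') Aʲ = 0`, hence `(Aʲ B)ᵀ (Q - Q') = 0`, for all `j < n`, and controllability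
forces `Q = Q'`.
-/

open Matrix

lemma mul_right_injective_of_rank_eq_card {K ι κ ν : Type*} [Field K] [Fintype ι] [Fintype κ]
    [DecidableEq κ] (C : Matrix ι κ K) (h : C.rank = Fintype.card κ) :
    Function.Injective (fun X : Matrix κ ν K => C * X) := by
  have hker : LinearMap.ker C.mulVecLin = ⊥ := by
    rw [← Submodule.finrank_eq_zero]
    have := LinearMap.finrank_range_add_finrank_ker C.mulVecLin
    rw [Module.finrank_fintype_fun_eq_card] at this
    unfold Matrix.rank at h
    omega
  intro X Y hXY
  exact ext_col fun j => LinearMap.ker_eq_bot.mp hker congr(($hXY).col j)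

section Riccati

variable {R : Type*} [CommRing R] {ι κ : Type*} [Fintype ι] [Fintype κ] [DecidableEq κ]
  (A : Matrix ι ι R) (B : Matrix ι κ R)

noncomputable def riccatiGain (P : Matrix ι ι R) : Matrix κ ι R :=
  -(Bᵀ * P * B + 1)⁻¹ * Bᵀ * P * A

noncomputable def riccatiStep (Q P : Matrix ι ι R) : Matrix ι ι R :=
  Aᵀ * P * A + Q - Aᵀ * P * B * (Bᵀ * P * B + 1)⁻¹ * Bᵀ * P * A

variable {A B} {P : Matrix ι ι R}

lemma transpose_mul_mul_add_mul_riccatiGain (hS : IsUnit (Bᵀ * P * B + 1).det) :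
    Bᵀ * P * (A + B * riccatiGain A B P) = -riccatiGain A B P := by
  have hSK : (Bᵀ * P * B + 1) * riccatiGain A B P = -(Bᵀ * P * A) := by
    rw [riccatiGain]
    set S := Bᵀ * P * B + 1
    simp only [Matrix.neg_mul, Matrix.mul_neg, Matrix.mul_assoc,
      mul_nonsing_inv_cancel_left _ _ hS]
  calc Bᵀ * P * (A + B * riccatiGain A B P)
      = Bᵀ * P * A + (Bᵀ * P * B + 1) * riccatiGain A B P - riccatiGain A B P := by
        simp only [Matrix.mul_add, Matrix.add_mul, Matrix.one_mul, Matrix.mul_assoc]; abel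
    _ = -riccatiGain A B P := by rw [hSK]; abel

lemma isUnit_det_add_mul_riccatiGain [DecidableEq ι] (hA : IsUnit A.det)
    (hS : IsUnit (Bᵀ * P * B + 1).det) :
    IsUnit (A + B * riccatiGain A B P).det := by
  have hfac : (1 + B * Bᵀ * P) * (A + B * riccatiGain A B P) = A := by
    rw [Matrix.add_mul, Matrix.one_mul, Matrix.mul_assoc B, Matrix.mul_assoc B,
      transpose_mul_mul_add_mul_riccatiGain hS, Matrix.mul_neg]
    abel
  rw [← hfac, det_mul] at hA
  exact isUnit_of_mul_isUnit_right hA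

lemma riccatiStep_eq_closedLoop (Q : Matrix ι ι R) (hS : IsUnit (Bᵀ * P * B + 1).det) :
    riccatiStep A B Q P = (A + B * riccatiGain A B P)ᵀ * P * (A + B * riccatiGain A B P)
      + (riccatiGain A B P)ᵀ * riccatiGain A B P + Q := by
  have hquad : (A + B * riccatiGain A B P)ᵀ * P * (A + B * riccatiGain A B P)
      = Aᵀ * P * (A + B * riccatiGain A B P) - (riccatiGain A B P)ᵀ * riccatiGain A B P := by
    rw [transpose_add, transpose_mul, Matrix.add_mul, Matrix.add_mul, Matrix.mul_assoc _ Bᵀ,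
      Matrix.mul_assoc _ (Bᵀ * P), transpose_mul_mul_add_mul_riccatiGain hS, Matrix.mul_neg]
    abel
  rw [hquad, riccatiStep, riccatiGain]
  simp only [Matrix.mul_add, Matrix.mul_neg, Matrix.neg_mul, Matrix.mul_assoc]
  abel

lemma riccatiStep_sub_riccatiStep {P' : Matrix ι ι R} (Q Q' : Matrix ι ι R) (hP : P.IsSymm)
    (hP' : P'.IsSymm) (h : Bᵀ * P = Bᵀ * P') :
    riccatiStep A B Q P - riccatiStep A B Q' P' = Aᵀ * (P - P') * A + (Q - Q') := by
  have hPB : P * B = P' * B := by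
    simpa only [transpose_mul, transpose_transpose, hP.eq, hP'.eq] using congrArg transpose h
  have hcorr : ∀ X : Matrix ι ι R, Aᵀ * X * B * (Bᵀ * X * B + 1)⁻¹ * Bᵀ * X * A
      = Aᵀ * (X * B) * (Bᵀ * X * B + 1)⁻¹ * (Bᵀ * X) * A := fun X => by
    simp only [Matrix.mul_assoc]
  rw [riccatiStep, riccatiStep, hcorr, hcorr, h, hPB, Matrix.mul_sub, Matrix.sub_mul]
  abel

end Riccati

lemma transpose_mul_eq_of_add_mul_riccatiGain_eq {K ι κ : Type*} [Field K] [Fintype ι]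
    [Fintype κ] [DecidableEq ι] [DecidableEq κ] {A P P' : Matrix ι ι K} {B : Matrix ι κ K}
    (hA : IsUnit A.det) (hB : B.rank = Fintype.card κ) (hS : IsUnit (Bᵀ * P * B + 1).det)
    (hS' : IsUnit (Bᵀ * P' * B + 1).det)
    (h : A + B * riccatiGain A B P = A + B * riccatiGain A B P') :
    Bᵀ * P = Bᵀ * P' := by
  have hgain : riccatiGain A B P = riccatiGain A B P' :=
    mul_right_injective_of_rank_eq_card B hB (add_left_cancel h)
  have hU := isUnit_det_add_mul_riccatiGain hA hS
  have hmul : Bᵀ * P * (A + B * riccatiGain A B P) = Bᵀ * P' * (A + B * riccatiGain A B P) := by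
    rw [transpose_mul_mul_add_mul_riccatiGain hS, hgain,
      transpose_mul_mul_add_mul_riccatiGain hS']
  rw [← mul_nonsing_inv_cancel_right _ (Bᵀ * P) hU, hmul, mul_nonsing_inv_cancel_right _ _ hU]

section Real

variable {ι κ : Type*} [Fintype ι] [Fintype κ] [DecidableEq κ]
  {A P Q : Matrix ι ι ℝ} {B : Matrix ι κ ℝ}

lemma Matrix.PosSemidef.isUnit_det_transpose_mul_mul_add_one (hP : P.PosSemidef) :
    IsUnit (Bᵀ * P * B + 1).det := by
  have hBPB : (Bᵀ * P * B).PosSemidef := by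
    simpa using hP.conjTranspose_mul_mul_same B
  exact (isUnit_iff_isUnit_det _).mp (PosDef.one.posSemidef_add hBPB).isUnit

lemma Matrix.PosSemidef.riccatiStep (hP : P.PosSemidef) (hQ : Q.PosSemidef) :
    (riccatiStep A B Q P).PosSemidef := by
  rw [riccatiStep_eq_closedLoop Q hP.isUnit_det_transpose_mul_mul_add_one]
  refine .add (.add ?_ ?_) hQ
  · simpa using hP.conjTranspose_mul_mul_same (A + B * riccatiGain A B P)
  · simpa using posSemidef_conjTranspose_mul_self (riccatiGain A B P)

lemma posSemidef_of_riccati_recursion {P : ℕ → Matrix ι ι ℝ} {N lo : ℕ} (hQ : Q.PosSemidef)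
    (hPN : (P N).PosSemidef)
    (hP : ∀ t, lo ≤ t → t < N → P t = riccatiStep A B Q (P (t + 1))) :
    ∀ t, lo ≤ t → t ≤ N → (P t).PosSemidef := by
  intro t ht htN
  induction htN using Nat.decreasingInduction with
  | self => exact hPN
  | of_succ k hk ih => rw [hP k ht hk]; exact (ih (by omega)).riccatiStep hQ

end Real

lemma eq_sum_of_backward_recursion {R : Type*} [Ring R] {X Y c : R} {D : ℕ → R} {N lo : ℕ}
    (hDN : D N = 0) (hD : ∀ t, lo ≤ t → t < N → D t = X * D (t + 1) * Y + c) :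
    ∀ j, j + lo ≤ N → D (N - j) = ∑ k ∈ Finset.range j, X ^ k * c * Y ^ k
  | 0, _ => by simpa using hDN
  | j + 1, hj => by
    rw [hD _ (by omega) (by omega), show N - (j + 1) + 1 = N - j by omega,
      eq_sum_of_backward_recursion hDN hD j (by omega), Finset.sum_range_succ',
      Finset.mul_sum, Finset.sum_mul]
    simp only [pow_succ' X, pow_succ Y, pow_zero, one_mul, mul_one, mul_assoc]

lemma mul_pow_mul_pow_eq_zero_of_backward_recursion {R ι κ : Type*} [Ring R] [Fintype ι]
    [DecidableEq ι] {X Y c : Matrix ι ι R} {L : Matrix κ ι R} {D : ℕ → Matrix ι ι R}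
    {N lo : ℕ} (hDN : D N = 0) (hD : ∀ t, lo ≤ t → t < N → D t = X * D (t + 1) * Y + c)
    (hL : ∀ t, lo ≤ t → t ≤ N → L * D t = 0) {j : ℕ} (hj : j + lo < N) :
    L * (X ^ j * c * Y ^ j) = 0 := by
  have hdiff : X ^ j * c * Y ^ j = D (N - (j + 1)) - D (N - j) := by
    rw [eq_sum_of_backward_recursion hDN hD (j + 1) (by omega),
      eq_sum_of_backward_recursion hDN hD j (by omega), Finset.sum_range_succ, add_sub_cancel_left]
  rw [hdiff, Matrix.mul_sub, hL _ (by omega) (by omega), hL _ (by omega) (by omega), sub_zero]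

def ctrbMatrix {K ι : Type*} [Semiring K] {n : ℕ} (A : Matrix (Fin n) (Fin n) K)
    (B : Matrix (Fin n) ι K) : Matrix (Fin n) (Fin n × ι) K :=
  of fun i kj => (A ^ (kj.1 : ℕ) * B) i kj.2

lemma eq_zero_of_ctrbMatrix_rank_eq {K ι ν : Type*} [Field K] [Fintype ι] {n : ℕ}
    {A : Matrix (Fin n) (Fin n) K} {B : Matrix (Fin n) ι K} (hC : (ctrbMatrix A B).rank = n)
    {Δ : Matrix (Fin n) ν K} (h : ∀ j < n, (A ^ j * B)ᵀ * Δ = 0) : Δ = 0 := by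
  have hinj := mul_right_injective_of_rank_eq_card (ν := ν) (ctrbMatrix A B)ᵀ
    (by rw [rank_transpose, hC, Fintype.card_fin])
  refine hinj ((ext fun kj l => ?_).trans (Matrix.mul_zero _).symm)
  -- row `(k, j)` of `(ctrbMatrix A B)ᵀ * Δ` is, definitionally, row `j` of `(A ^ k * B)ᵀ * Δ`
  exact congr_fun₂ (h kj.1 kj.1.isLt) kj.2 l

lemma eq_zero_of_forall_transpose_mul_pow_mul_pow_eq_zero {K ι : Type*} [Field K] [Fintype ι]
    {n : ℕ} {A : Matrix (Fin n) (Fin n) K} {B : Matrix (Fin n) ι K} (hA : IsUnit A.det)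
    (hC : (ctrbMatrix A B).rank = n) {Δ : Matrix (Fin n) (Fin n) K}
    (h : ∀ j < n, Bᵀ * ((Aᵀ) ^ j * Δ * A ^ j) = 0) : Δ = 0 := by
  refine eq_zero_of_ctrbMatrix_rank_eq hC fun j hj => ?_
  have hAj : IsUnit (A ^ j).det := by rw [det_pow]; exact hA.pow j
  calc (A ^ j * B)ᵀ * Δ = Bᵀ * ((Aᵀ) ^ j * Δ * A ^ j) * (A ^ j)⁻¹ := by
        rw [transpose_mul, transpose_pow, ← Matrix.mul_assoc, ← Matrix.mul_assoc,
          mul_nonsing_inv_cancel_right _ _ hAj]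
    _ = 0 := by rw [h j hj, Matrix.zero_mul]

theorem stmt4 {n m : ℕ} (A : Matrix (Fin n) (Fin n) ℝ) (B : Matrix (Fin n) (Fin m) ℝ)
    (hA : IsUnit A.det) (hB : B.rank = m)
    (hctrb : (Matrix.of fun i (kj : Fin n × Fin m) => (A ^ (kj.1 : ℕ) * B) i kj.2).rank = n)
    (N : ℕ) (hN : n + 2 ≤ N)
    (Q Q' : Matrix (Fin n) (Fin n) ℝ) (hQ : Q.PosSemidef) (hQ' : Q'.PosSemidef)
    (P P' : ℕ → Matrix (Fin n) (Fin n) ℝ)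
    (hPN : P N = 0) (hP'N : P' N = 0)
    (hric : ∀ t, 2 ≤ t → t ≤ N - 1 →
      P t = Aᵀ * P (t+1) * A + Q - Aᵀ * P (t+1) * B * (Bᵀ * P (t+1) * B + 1)⁻¹ * Bᵀ * P (t+1) * A)
    (hric' : ∀ t, 2 ≤ t → t ≤ N - 1 →
      P' t = Aᵀ * P' (t+1) * A + Q' - Aᵀ * P' (t+1) * B * (Bᵀ * P' (t+1) * B + 1)⁻¹ * Bᵀ * P' (t+1) * A)
    (hcl : ∀ t, 1 ≤ t → t ≤ N - 1 →
      A + B * (-(Bᵀ * P (t+1) * B + 1)⁻¹ * Bᵀ * P (t+1) * A)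
        = A + B * (-(Bᵀ * P' (t+1) * B + 1)⁻¹ * Bᵀ * P' (t+1) * A)) :
    Q = Q' := by
  have hstep : ∀ t, 2 ≤ t → t < N → P t = riccatiStep A B Q (P (t + 1)) :=
    fun t h₁ h₂ => hric t h₁ (by omega)
  have hstep' : ∀ t, 2 ≤ t → t < N → P' t = riccatiStep A B Q' (P' (t + 1)) :=
    fun t h₁ h₂ => hric' t h₁ (by omega)
  have hpsd := posSemidef_of_riccati_recursion hQ (hPN ▸ .zero) hstep
  have hpsd' := posSemidef_of_riccati_recursion hQ' (hP'N ▸ .zero) hstep'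
  have hBP : ∀ t, 2 ≤ t → t ≤ N → Bᵀ * P t = Bᵀ * P' t := by
    intro t h₁ h₂
    obtain h₂ | rfl := h₂.lt_or_eq
    · have hclt := hcl (t - 1) (by omega) (by omega)
      rw [Nat.sub_add_cancel (by omega : 1 ≤ t)] at hclt
      exact transpose_mul_eq_of_add_mul_riccatiGain_eq hA (by rw [hB, Fintype.card_fin])
        (hpsd t h₁ h₂.le).isUnit_det_transpose_mul_mul_add_one
        (hpsd' t h₁ h₂.le).isUnit_det_transpose_mul_mul_add_one hclt
    · rw [hPN, hP'N]
  have hdiff : ∀ t, 2 ≤ t → t < N →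
      P t - P' t = Aᵀ * (P (t + 1) - P' (t + 1)) * A + (Q - Q') := by
    intro t h₁ h₂
    rw [hstep t h₁ h₂, hstep' t h₁ h₂]
    exact riccatiStep_sub_riccatiStep Q Q'
      (isHermitian_iff_isSymm.mp (hpsd _ (by omega) h₂).isHermitian)
      (isHermitian_iff_isSymm.mp (hpsd' _ (by omega) h₂).isHermitian) (hBP (t + 1) (by omega) h₂)
  refine sub_eq_zero.mp (eq_zero_of_forall_transpose_mul_pow_mul_pow_eq_zero hA hctrb
    fun j hj => ?_)
  exact mul_pow_mul_pow_eq_zero_of_backward_recursion (D := fun t => P t - P' t)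
    (by simp [hPN, hP'N]) hdiff
    (fun t h₁ h₂ => by simp only [Matrix.mul_sub, hBP t h₁ h₂, sub_self]) (by omega)
end

section
/- Let $A$ be invertible, $B$ have full column rank, $P_{t+1} \succeq 0$, and $K_t = -(B^T P_{t+1} B + I)^{-1} B^T P_{t+1} A$, with $A_{cl}(t) = A + BK_t$. Then $B^T P_{t+1} A_{cl}(t) = -K_t$, and since $A_{cl}(t)$ is invertible, $B^T P_{t+1} = -K_t A_{cl}(t)^{-1}$. Consequently, if two positive semidefinite matrices $P_{t+1}$ and $P'_{t+1}$ yield the same closed-loop matrix $A_{cl}(t)$ via their respective gains, then $B^T(P_{t+1} - P'_{t+1}) = 0$. -/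
/-!
Write `M = BᵀPB + 1`, which is positive definite, so that `M K = -BᵀPA`. Then
`BᵀP(A + BK) = BᵀPA + (M - 1)K = -K`, and feeding this back gives
`(1 + BBᵀP)(A + BK) = A + BK - BK = A`; hence `A + BK` is invertible together with `A`, and
`BᵀP = -K (A + BK)⁻¹`. Two gains with the same closed loop satisfy `BK = BK'`, so `K = K'`
because `B` is injective, and then `BᵀP = BᵀP'`.
-/

open Matrix

namespace Matrix

variable {m n : Type*}

theorem mulVec_injective_of_rank_eq_card [Fintype m] {K : Type*} [Field K] {B : Matrix n m K}
    (hB : B.rank = Fintype.card m) : Function.Injective B.mulVec := by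
  have hker : Module.finrank K (LinearMap.ker B.mulVecLin) = 0 := by
    have := LinearMap.finrank_range_add_finrank_ker B.mulVecLin
    rw [Module.finrank_fintype_fun_eq_card, ← rank, hB] at this
    omega
  exact LinearMap.ker_eq_bot.mp (Submodule.finrank_eq_zero.mp hker)

theorem mul_left_cancel_of_rank_eq_card [Fintype m] [Fintype n] [DecidableEq n] {K : Type*}
    [Field K] {B : Matrix n m K} (hB : B.rank = Fintype.card m) {X Y : Matrix m n K}
    (h : B * X = B * Y) : X = Y :=
  ext_of_mulVec_single fun i => mulVec_injective_of_rank_eq_card hB <| by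
    rw [mulVec_mulVec, mulVec_mulVec, h]

variable [Fintype m] [Fintype n] {A : Matrix n n ℝ} {B : Matrix n m ℝ} {P : Matrix n n ℝ}

theorem one_add_mul_transpose_mul_mul_add_mul [DecidableEq n] {K : Matrix m n ℝ}
    (hK : Bᵀ * P * (A + B * K) = -K) : (1 + B * (Bᵀ * P)) * (A + B * K) = A := by
  rw [Matrix.add_mul, Matrix.one_mul, Matrix.mul_assoc, hK, Matrix.mul_neg, add_neg_cancel_right]

variable [DecidableEq m]

theorem isUnit_det_transpose_mul_mul_add_one (hP : P.PosSemidef) :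
    IsUnit (Bᵀ * P * B + 1).det := by
  have hBPB : (Bᵀ * P * B).PosSemidef := by
    simpa only [conjTranspose_eq_transpose_of_trivial] using hP.conjTranspose_mul_mul_same B
  exact (isUnit_iff_isUnit_det _).mp (PosDef.posSemidef_add hBPB PosDef.one).isUnit

/-- The optimal feedback gain of one step of the discrete-time LQR Riccati recursion. -/
noncomputable def lqrGain (A : Matrix n n ℝ) (B : Matrix n m ℝ) (P : Matrix n n ℝ) :
    Matrix m n ℝ :=
  -(Bᵀ * P * B + 1)⁻¹ * Bᵀ * P * A

theorem transpose_mul_mul_add_one_mul_lqrGain (hP : P.PosSemidef) :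
    (Bᵀ * P * B + 1) * lqrGain A B P = -(Bᵀ * P * A) := by
  simp only [lqrGain, Matrix.neg_mul, Matrix.mul_neg, ← Matrix.mul_assoc,
    mul_nonsing_inv _ (isUnit_det_transpose_mul_mul_add_one hP), Matrix.one_mul]

theorem transpose_mul_mul_add_mul_lqrGain (hP : P.PosSemidef) :
    Bᵀ * P * (A + B * lqrGain A B P) = -lqrGain A B P := by
  have h := transpose_mul_mul_add_one_mul_lqrGain (A := A) (B := B) hP
  rw [Matrix.add_mul, Matrix.one_mul] at h
  rw [Matrix.mul_add, ← Matrix.mul_assoc, eq_neg_iff_add_eq_zero, add_assoc, h, add_neg_cancel]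

variable [DecidableEq n]

theorem isUnit_det_add_mul_lqrGain (hA : IsUnit A.det) (hP : P.PosSemidef) :
    IsUnit (A + B * lqrGain A B P).det := by
  have hcl := one_add_mul_transpose_mul_mul_add_mul (transpose_mul_mul_add_mul_lqrGain (A := A)
    (B := B) hP)
  rw [← hcl, det_mul] at hA
  exact isUnit_of_mul_isUnit_right hA

theorem transpose_mul_eq_neg_lqrGain_mul_inv (hA : IsUnit A.det) (hP : P.PosSemidef) :
    Bᵀ * P = -lqrGain A B P * (A + B * lqrGain A B P)⁻¹ := by
  rw [← transpose_mul_mul_add_mul_lqrGain hP,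
    mul_nonsing_inv_cancel_right _ _ (isUnit_det_add_mul_lqrGain hA hP)]

end Matrix

theorem stmt5 {n m : ℕ} (A : Matrix (Fin n) (Fin n) ℝ) (B : Matrix (Fin n) (Fin m) ℝ)
    (hA : IsUnit A.det) (hB : B.rank = m)
    (P P' : Matrix (Fin n) (Fin n) ℝ) (hP : P.PosSemidef) (hP' : P'.PosSemidef)
    (K K' : Matrix (Fin m) (Fin n) ℝ)
    (hK : K = -(Bᵀ * P * B + 1)⁻¹ * Bᵀ * P * A)
    (hK' : K' = -(Bᵀ * P' * B + 1)⁻¹ * Bᵀ * P' * A) :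
    Bᵀ * P * (A + B * K) = -K ∧
    Bᵀ * P = -K * (A + B * K)⁻¹ ∧
    (A + B * K = A + B * K' → Bᵀ * (P - P') = 0) := by
  change K = lqrGain A B P at hK
  change K' = lqrGain A B P' at hK'
  subst hK hK'
  refine ⟨transpose_mul_mul_add_mul_lqrGain hP, transpose_mul_eq_neg_lqrGain_mul_inv hA hP,
    fun hcl => ?_⟩
  have hgain : lqrGain A B P = lqrGain A B P' :=
    mul_left_cancel_of_rank_eq_card (hB.trans (Fintype.card_fin m).symm) (add_right_injective A hcl)
  rw [Matrix.mul_sub, transpose_mul_eq_neg_lqrGain_mul_inv hA hP,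
    transpose_mul_eq_neg_lqrGain_mul_inv hA hP', hgain, sub_self]
end

section
/- Let $\Delta Q \in \mathbb{S}^n$ and $\Delta P_t = \sum_{k=0}^{N-1-t} (A^T)^k \Delta Q A^k$ for $t = 2, \ldots, N-1$, where $A$ is invertible. If $B^T \Delta P_t = 0$ for all $t = 2, \ldots, N-1$, then $B^T (A^T)^k \Delta Q = 0$ for all $k = 0, 1, \ldots, N-3$. -/
open Matrix

namespace Matrix

variable {l n R : Type*} [Fintype n] [DecidableEq n] [CommRing R]

theorem eq_zero_of_mul_pow_eq_zero {X : Matrix l n R} {A : Matrix n n R} (hA : IsUnit A) {k : ℕ}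
    (h : X * A ^ k = 0) : X = 0 := by
  have hAk : IsUnit (A ^ k).det := (isUnit_iff_isUnit_det _).mp (hA.pow k)
  rw [← Matrix.mul_one X, ← mul_nonsing_inv _ hAk, ← Matrix.mul_assoc, h, Matrix.zero_mul]

theorem mul_pow_mul_eq_zero_of_mul_sum_eq_zero {X : Matrix l n R} {M Q A : Matrix n n R}
    (hA : IsUnit A) {J : ℕ} (h : ∀ j ≤ J, X * ∑ k ∈ Finset.range (j + 1), M ^ k * Q * A ^ k = 0) :
    ∀ k ≤ J, X * M ^ k * Q = 0 := by
  intro k hk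
  induction k using Nat.strong_induction_on with
  | _ k ih =>
    have hterm : ∀ i, X * (M ^ i * Q * A ^ i) = X * M ^ i * Q * A ^ i := by
      intro i; simp only [Matrix.mul_assoc]
    have hlower : ∑ i ∈ Finset.range k, X * (M ^ i * Q * A ^ i) = 0 :=
      Finset.sum_eq_zero fun i hi => by
        rw [hterm, ih i (Finset.mem_range.mp hi) (by grind), Matrix.zero_mul]
    have htop : X * M ^ k * Q * A ^ k = 0 := by
      have hk' := h k hk
      rwa [Finset.sum_range_succ, Matrix.mul_add, Matrix.mul_sum, hlower, zero_add, hterm] at hk'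
    exact eq_zero_of_mul_pow_eq_zero hA htop

end Matrix

theorem stmt7_general {n m : ℕ} (A : Matrix (Fin n) (Fin n) ℝ) (B : Matrix (Fin n) (Fin m) ℝ)
    (hA : IsUnit A.det)
    (ΔQ : Matrix (Fin n) (Fin n) ℝ) (N : ℕ) (hN : 3 ≤ N)
    (h : ∀ t, 2 ≤ t → t ≤ N - 1 →
      Bᵀ * (∑ k ∈ Finset.range (N - t), (Aᵀ) ^ k * ΔQ * A ^ k) = 0) :
    ∀ k ≤ N - 3, Bᵀ * (Aᵀ) ^ k * ΔQ = 0 := by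
  refine mul_pow_mul_eq_zero_of_mul_sum_eq_zero ((isUnit_iff_isUnit_det A).mpr hA) fun j hj => ?_
  have hjt := h (N - 1 - j) (by omega) (by omega)
  rwa [show N - (N - 1 - j) = j + 1 by omega] at hjt

theorem stmt7 {n m : ℕ} (A : Matrix (Fin n) (Fin n) ℝ) (B : Matrix (Fin n) (Fin m) ℝ)
    (hA : IsUnit A.det)
    (ΔQ : Matrix (Fin n) (Fin n) ℝ) (hsym : ΔQ.IsSymm) (N : ℕ) (hN : 3 ≤ N)
    (h : ∀ t, 2 ≤ t → t ≤ N - 1 →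
      Bᵀ * (∑ k ∈ Finset.range (N - t), (Aᵀ) ^ k * ΔQ * A ^ k) = 0) :
    ∀ k ≤ N - 3, Bᵀ * (Aᵀ) ^ k * ΔQ = 0 :=
  stmt7_general A B hA ΔQ N hN h
end

section
/- Let $a^{(1)}, \ldots, a^{(n)} \in \mathbb{R}^n$ be linearly independent vectors, where $a^{(i)} = (a^{(i)}_1, \ldots, a^{(i)}_n)^T$. For each $i, j$, let $\bar\chi^{(i)}_j \in \mathbb{R}^{n\times n}$ be the upper-triangular Toeplitz matrix with diagonal entries $a^{(i)}_j$ and arbitrary entries $\xi^{(i)}_{j,1}, \ldots, \xi^{(i)}_{j,n-1}$ on the superdiagonals. Then the block matrix $\bar\chi \in \mathbb{R}^{n^2 \times n^2}$ with block entries $[\bar\chi]_{ij} = \bar\chi^{(i)}_j$ is nonsingular, for all choices of the $\xi^{(i)}_{j,l}$. -/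
/-!
Order rows and columns by their position `k` inside the Toeplitz blocks rather than by block.
Then the matrix is block upper triangular, and every diagonal block is the matrix `A` with rows
`a⁽ⁱ⁾`, so its determinant is `(det A)ⁿ`, a unit since the rows of `A` are linearly independent.
-/

open Matrix

namespace Matrix

variable {R ι κ : Type*}

def sndFiberEquiv (k : κ) : {p : ι × κ // p.2 = k} ≃ ι where
  toFun p := p.1.1
  invFun i := ⟨(i, k), rfl⟩
  left_inv p := Subtype.ext (Prod.ext rfl p.2.symm)
  right_inv _ := rfl

theorem toSquareBlock_snd_eq_submatrix {M : Matrix (ι × κ) (ι × κ) R} {A : Matrix ι ι R}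
    (hdiag : ∀ i j k, M (i, k) (j, k) = A i j) (k : κ) :
    M.toSquareBlock Prod.snd k = A.submatrix (sndFiberEquiv k) (sndFiberEquiv k) := by
  ext ⟨⟨i, k₁⟩, h₁⟩ ⟨⟨j, k₂⟩, h₂⟩
  dsimp only at h₁ h₂
  subst h₁ h₂
  exact hdiag i j _

theorem det_of_blockTriangular_snd [CommRing R] [Fintype ι] [DecidableEq ι] [Fintype κ]
    [LinearOrder κ] {M : Matrix (ι × κ) (ι × κ) R} {A : Matrix ι ι R}
    (hM : M.BlockTriangular Prod.snd) (hdiag : ∀ i j k, M (i, k) (j, k) = A i j) :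
    M.det = A.det ^ Fintype.card κ := by
  cases isEmpty_or_nonempty ι
  · simp [det_isEmpty]
  rw [hM.det, Finset.image_univ_of_surjective Prod.snd_surjective]
  simp_rw [toSquareBlock_snd_eq_submatrix hdiag, det_submatrix_equiv_self, Finset.prod_const,
    Finset.card_univ]

end Matrix

/-- Row `(i, k)` is row `k` of block row `i`; the `(i, j)` block is upper-triangular Toeplitz with
diagonal `A i j` and `l`-th superdiagonal `ξ i j l`. -/
def blockUpperToeplitz {R ι : Type*} [Zero R] {n : ℕ} (A : Matrix ι ι R) (ξ : ι → ι → ℕ → R) :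
    Matrix (ι × Fin n) (ι × Fin n) R :=
  of fun ik jl =>
    if ik.2 = jl.2 then A ik.1 jl.1
    else if ik.2 < jl.2 then ξ ik.1 jl.1 ((jl.2 : ℕ) - (ik.2 : ℕ))
    else 0

section blockUpperToeplitz

variable {R ι : Type*} {n : ℕ}

theorem blockTriangular_blockUpperToeplitz [Zero R] (A : Matrix ι ι R) (ξ : ι → ι → ℕ → R) :
    (blockUpperToeplitz (n := n) A ξ).BlockTriangular Prod.snd := by
  intro p q hqp
  simp only [blockUpperToeplitz, of_apply, if_neg hqp.ne', if_neg (lt_asymm hqp)]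

theorem det_blockUpperToeplitz [CommRing R] [Fintype ι] [DecidableEq ι] (A : Matrix ι ι R)
    (ξ : ι → ι → ℕ → R) :
    (blockUpperToeplitz (n := n) A ξ).det = A.det ^ n := by
  rw [det_of_blockTriangular_snd (blockTriangular_blockUpperToeplitz A ξ), Fintype.card_fin]
  intro i j k
  simp [blockUpperToeplitz]

end blockUpperToeplitz

theorem stmt8 {n : ℕ} (a : Fin n → Fin n → ℝ) (ha : LinearIndependent ℝ a)
    (ξ : Fin n → Fin n → ℕ → ℝ) :
    IsUnit (Matrix.of fun (ik : Fin n × Fin n) (jl : Fin n × Fin n) =>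
      if ik.2 = jl.2 then a ik.1 jl.1
      else if ik.2 < jl.2 then ξ ik.1 jl.1 ((jl.2 : ℕ) - (ik.2 : ℕ))
      else (0 : ℝ)).det := by
  have hA : IsUnit (of a).det :=
    (isUnit_iff_isUnit_det _).mp (linearIndependent_rows_iff_isUnit.mp ha)
  change IsUnit (blockUpperToeplitz (of a) ξ).det
  rw [det_blockUpperToeplitz]
  exact hA.pow n
end
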